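/- arXiv:2303.07664 — 3 statements merged into one kernel-verified Lean document; each statement's English description precedes it below -/
import Mathlib

section
/- Even-part decomposition of a generalized hypergeometric series: let q ≥ 0 be an integer, let a₁,…,a_{q+1} be real numbers, let b₁,…,b_q be positive real numbers, and let z be a real number with |z| < 1. Then ∑_{n≥0} ((a₁)ₙ⋯(a_{q+1})ₙ)/((b₁)ₙ⋯(b_q)ₙ) · zⁿ/n! + ∑_{n≥0} ((a₁)ₙ⋯(a_{q+1})ₙ)/((b₁)ₙ⋯(b_q)ₙ) · (−z)ⁿ/n! = 2·∑_{n≥0} [∏_{j=1}^{q+1} (a_j/2)ₙ·(a_j/2+1/2)ₙ] / [(1/2)ₙ·∏_{k=1}^{q} (b_k/2)ₙ·(b_k/2+1/2)ₙ] · (z²)ⁿ/n!. -/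
/-! The series `∑ cₙ zⁿ` and `∑ cₙ (-z)ⁿ` cancel in odd degrees, and the even coefficients
`c₂ₘ` of a `q+1`-over-`q` hypergeometric series are again hypergeometric in `z²`, by the
duplication formula `(a)₂ₘ = 4ᵐ (a/2)ₘ ((a+1)/2)ₘ` applied to every parameter and to
`(2m)! = (1)₂ₘ`. The powers of `4` cancel because there is one more upper parameter than
lower ones. Convergence for `|z| < 1` is the ratio test. -/

open Real

/-- The Pochhammer symbol (shifted factorial) `(a)ₙ` for a real number `a`. -/
noncomputable def poch (a : ℝ) (n : ℕ) : ℝ := Polynomial.eval a (ascPochhammer ℝ n)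

open Filter Topology Finset

lemma poch_succ (a : ℝ) (n : ℕ) : poch a (n + 1) = poch a n * (a + n) :=
  ascPochhammer_succ_eval n a

lemma poch_one (n : ℕ) : poch 1 n = n.factorial :=
  ascPochhammer_eval_one ℝ n

lemma poch_two_mul (a : ℝ) (m : ℕ) :
    poch a (2 * m) = 4 ^ m * poch (a / 2) m * poch (a / 2 + 1 / 2) m := by
  induction m with
  | zero => simp [poch]
  | succ m ih =>
    rw [show 2 * (m + 1) = 2 * m + 1 + 1 by ring, poch_succ, poch_succ, ih, poch_succ, poch_succ]
    push_cast
    ring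

lemma cast_factorial_two_mul (m : ℕ) :
    ((2 * m).factorial : ℝ) = 4 ^ m * poch (1 / 2) m * m.factorial := by
  rw [← poch_one, poch_two_mul, ← poch_one]
  norm_num

lemma summable_of_succ_eq_mul_of_tendsto {𝕜 : Type*} [NormedField 𝕜] [CompleteSpace 𝕜]
    {f r : ℕ → 𝕜} {ρ : 𝕜} (hρ : ‖ρ‖ < 1) (hf : ∀ n, f (n + 1) = r n * f n)
    (hr : Tendsto r atTop (𝓝 ρ)) : Summable f := by
  refine summable_of_ratio_norm_eventually_le (r := (1 + ‖ρ‖) / 2) (by linarith) ?_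
  filter_upwards [hr.norm.eventually_lt_const (by linarith : ‖ρ‖ < (1 + ‖ρ‖) / 2)] with n hn
  rw [hf, norm_mul]
  gcongr

lemma tsum_mul_pow_add_tsum_mul_neg_pow {𝕜 : Type*} [Field 𝕜] [TopologicalSpace 𝕜]
    [IsTopologicalRing 𝕜] [T2Space 𝕜] {c : ℕ → 𝕜} {z : 𝕜}
    (h₁ : Summable fun n ↦ c n * z ^ n) (h₂ : Summable fun n ↦ c n * (-z) ^ n) :
    ∑' n, c n * z ^ n + ∑' n, c n * (-z) ^ n = 2 * ∑' m, c (2 * m) * (z ^ 2) ^ m := by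
  rw [← h₁.tsum_add h₂, ← tsum_mul_left]
  have hinj : Function.Injective (fun m : ℕ ↦ 2 * m) := fun _ _ h ↦ by simpa using h
  have hsupport : (Function.support fun n ↦ c n * z ^ n + c n * (-z) ^ n) ⊆
      Set.range (fun m : ℕ ↦ 2 * m) := by
    intro n hn
    obtain ⟨m, rfl⟩ | hn_odd := Nat.even_or_odd n
    · exact ⟨m, two_mul m⟩
    · rw [Function.mem_support, hn_odd.neg_pow] at hn
      exact absurd (by ring) hn
  rw [← hinj.tsum_eq hsupport]
  refine tsum_congr fun m ↦ ?_
  rw [(even_two_mul m).neg_pow, pow_mul]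
  ring

noncomputable def hypergeomCoeff {p q : ℕ} (a : Fin p → ℝ) (b : Fin q → ℝ) (n : ℕ) : ℝ :=
  (∏ j, poch (a j) n) / ((∏ k, poch (b k) n) * n.factorial)

section

variable {q : ℕ} (a : Fin (q + 1) → ℝ) (b : Fin q → ℝ)

lemma hypergeomCoeff_succ (n : ℕ) :
    hypergeomCoeff a b (n + 1) =
      (a 0 + n) / (n + 1) * (∏ k, (a k.succ + n) / (b k + n)) * hypergeomCoeff a b n := by
  simp only [hypergeomCoeff, poch_succ, prod_mul_distrib, prod_div_distrib, Fin.prod_univ_succ,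
    Nat.factorial_succ, Nat.cast_mul, Nat.cast_succ]
  generalize (n : ℝ) + 1 = s
  ring

lemma tendsto_hypergeomCoeff_ratio :
    Tendsto (fun n : ℕ ↦ (a 0 + n) / (n + 1) * ∏ k, (a k.succ + n) / (b k + n)) atTop (𝓝 1) := by
  have h (x y : ℝ) : Tendsto (fun n : ℕ ↦ (x + n) / (y + n)) atTop (𝓝 1) := by
    simpa using tendsto_add_mul_div_add_mul_atTop_nhds x y 1 one_ne_zero
  simpa [add_comm _ (1 : ℝ)] using
    (h (a 0) 1).mul (tendsto_finsetProd univ fun k _ ↦ h (a k.succ) (b k))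

lemma summable_hypergeomCoeff_mul_pow {z : ℝ} (hz : |z| < 1) :
    Summable fun n ↦ hypergeomCoeff a b n * z ^ n := by
  refine summable_of_succ_eq_mul_of_tendsto (ρ := 1 * z) (by simpa using hz) (fun n ↦ ?_)
    ((tendsto_hypergeomCoeff_ratio a b).mul_const z)
  rw [hypergeomCoeff_succ, pow_succ]
  ring

lemma hypergeomCoeff_two_mul (m : ℕ) :
    hypergeomCoeff a b (2 * m) =
      (∏ j, poch (a j / 2) m * poch (a j / 2 + 1 / 2) m) /
        (poch (1 / 2) m * (∏ k, poch (b k / 2) m * poch (b k / 2 + 1 / 2) m) * m.factorial) := by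
  simp only [hypergeomCoeff, poch_two_mul, cast_factorial_two_mul, prod_mul_distrib, prod_const,
    card_univ, Fintype.card_fin]
  have h4 : (4 : ℝ) ^ m ≠ 0 := by positivity
  generalize (4 : ℝ) ^ m = t at h4 ⊢
  conv_rhs => rw [← mul_div_mul_left _ _ (pow_ne_zero (q + 1) h4)]
  ring

end

theorem even_part_decomposition_general (q : ℕ) (a : Fin (q + 1) → ℝ) (b : Fin q → ℝ)
    (z : ℝ) (hz : |z| < 1) :
    (∑' n : ℕ, (∏ j, poch (a j) n) / ((∏ k, poch (b k) n) * (n.factorial : ℝ)) * z^n)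
      + (∑' n : ℕ, (∏ j, poch (a j) n) / ((∏ k, poch (b k) n) * (n.factorial : ℝ)) * (-z)^n)
      = 2 * ∑' n : ℕ,
          (∏ j, poch (a j / 2) n * poch (a j / 2 + 1/2) n) /
            (poch (1/2) n * (∏ k, poch (b k / 2) n * poch (b k / 2 + 1/2) n) *
              (n.factorial : ℝ)) * (z^2)^n := by
  have h := tsum_mul_pow_add_tsum_mul_neg_pow (summable_hypergeomCoeff_mul_pow a b hz)
    (summable_hypergeomCoeff_mul_pow a b (z := -z) (by rwa [abs_neg]))
  simp only [hypergeomCoeff_two_mul] at h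
  exact h

/-- Even-part decomposition of a generalized hypergeometric series
`₍q+1₎F_q(a₁,…,a_{q+1}; b₁,…,b_q; z)`. -/
theorem even_part_decomposition (q : ℕ) (a : Fin (q + 1) → ℝ) (b : Fin q → ℝ)
    (hb : ∀ k, 0 < b k) (z : ℝ) (hz : |z| < 1) :
    (∑' n : ℕ, (∏ j, poch (a j) n) / ((∏ k, poch (b k) n) * (n.factorial : ℝ)) * z^n)
      + (∑' n : ℕ, (∏ j, poch (a j) n) / ((∏ k, poch (b k) n) * (n.factorial : ℝ)) * (-z)^n)
      = 2 * ∑' n : ℕ,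
          (∏ j, poch (a j / 2) n * poch (a j / 2 + 1/2) n) /
            (poch (1/2) n * (∏ k, poch (b k / 2) n * poch (b k / 2 + 1/2) n) *
              (n.factorial : ℝ)) * (z^2)^n :=
  even_part_decomposition_general q a b z hz
end

section
/- The maximum value of the Clausen function satisfies Cl₂(π/3) = (1/(2√3))·(ψ′(1/3) − 2π²/3), where ψ′(1/3) = 9·∑_{k≥0} 1/(3k+1)². Concretely, ∑_{n≥1} sin(nπ/3)/n² = (1/(2√3))·(9·∑_{k≥0} 1/(3k+1)² − 2π²/3). -/
open Real Finset

/-! For `n ≥ 1`, `sin (n π / 3) = (√3 / 2) χ(n)` with `χ` of period 6 taking the values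
`0, 1, 1, 0, -1, -1`, so `Cl₂(π/3) = (√3/2)(S₁ + S₂ - S₄ - S₅)` where `Sᵣ = ∑_{n ≡ r (6)} 1/n²`.
Writing `A`, `B` for the sums over `n ≡ 1, 2 (mod 3)`, splitting by parity gives `A = S₁ + S₄`,
`B = S₂ + S₅`, and `S₂ = A/4`, `S₄ = B/4`; hence `Cl₂(π/3) = (3√3/4)(A - B)`. Removing the
multiples of 3 from `ζ(2) = π²/6` gives `A + B = (8/9)(π²/6)`, which eliminates `B`. -/

theorem tsum_eq_sum_range_tsum_mul_add {f : ℕ → ℝ} (hf : Summable f) (d : ℕ) [NeZero d] :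
    ∑' n, f n = ∑ r ∈ range d, ∑' k, f (d * k + r) := by
  rw [Nat.sumByResidueClasses hf d]
  refine Finset.sum_nbij (·.val) (fun j _ => mem_range.2 j.val_lt)
    (fun i _ j _ h => ZMod.val_injective d h) (fun r hr => ?_) fun j _ => ?_
  · exact ⟨r, mem_univ _, ZMod.val_natCast_of_lt (mem_range.1 hr)⟩
  · simp only [add_comm]

theorem summable_div_nat_sq_of_abs_le {c : ℕ → ℝ} {C : ℝ} (hC : ∀ n, |c n| ≤ C) :
    Summable fun n : ℕ => c n / (n : ℝ) ^ 2 := by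
  refine .of_norm_bounded ((summable_one_div_nat_pow.2 one_lt_two).mul_left C) fun n => ?_
  rw [norm_div, norm_pow, Real.norm_natCast, mul_one_div]
  gcongr
  exact hC n

/-- `∑_{n ≡ r (mod d)} 1 / n²`, where for `r = 0` the term `n = 0` is `1 / 0 = 0`. -/
noncomputable def invSqSum (d r : ℕ) : ℝ :=
  ∑' k : ℕ, 1 / ((d * k + r : ℕ) : ℝ) ^ 2

theorem invSqSum_one_zero : invSqSum 1 0 = π ^ 2 / 6 := by
  simpa [invSqSum] using hasSum_zeta_two.tsum_eq

theorem summable_one_div_nat_mul_add_sq {d : ℕ} (hd : d ≠ 0) (r : ℕ) :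
    Summable fun k : ℕ => 1 / ((d * k + r : ℕ) : ℝ) ^ 2 :=
  (summable_one_div_nat_pow.2 one_lt_two).comp_injective fun a b h => by simpa [hd] using h

theorem invSqSum_eq_sum_range (d r m : ℕ) [NeZero d] [NeZero m] :
    invSqSum d r = ∑ j ∈ range m, invSqSum (m * d) (d * j + r) := by
  rw [invSqSum, tsum_eq_sum_range_tsum_mul_add (summable_one_div_nat_mul_add_sq (NeZero.ne d) r) m]
  refine sum_congr rfl fun j _ => tsum_congr fun k => ?_
  congr 3
  ring

theorem invSqSum_mul (c d r : ℕ) : invSqSum (c * d) (c * r) = invSqSum d r / c ^ 2 := by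
  rw [invSqSum, invSqSum, ← tsum_div_const]
  refine tsum_congr fun k => ?_
  rw [show c * d * k + c * r = c * (d * k + r) by ring]
  push_cast
  rw [mul_pow, div_div, mul_comm]

theorem tsum_periodic_div_sq {c : ℕ → ℝ} {d : ℕ} [NeZero d] (hc : Function.Periodic c d) {C : ℝ}
    (hC : ∀ n, |c n| ≤ C) :
    ∑' n : ℕ, c n / (n : ℝ) ^ 2 = ∑ r ∈ range d, c r * invSqSum d r := by
  rw [tsum_eq_sum_range_tsum_mul_add (summable_div_nat_sq_of_abs_le hC) d]
  refine sum_congr rfl fun r _ => ?_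
  rw [invSqSum, ← tsum_mul_left]
  refine tsum_congr fun k => ?_
  have hcr : c (r + k * d) = c r := by simpa only [Nat.cast_id] using hc.nat_mul k r
  rw [show d * k + r = r + k * d by ring, hcr, mul_one_div]

theorem tsum_sin_nat_mul_pi_div_three_div_sq :
    ∑' n : ℕ, sin (n * π / 3) / (n : ℝ) ^ 2 =
      √3 / 2 * (invSqSum 6 1 + invSqSum 6 2 - invSqSum 6 4 - invSqSum 6 5) := by
  have hper : Function.Periodic (fun n : ℕ => sin (n * π / 3)) 6 := fun n => by
    dsimp only
    rw [show ((n + 6 : ℕ) : ℝ) * π / 3 = n * π / 3 + 2 * π by push_cast; ring, sin_add_two_pi]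
  rw [tsum_periodic_div_sq hper fun n => abs_sin_le_one _]
  have h2 : sin (2 * π / 3) = √3 / 2 := by
    rw [show 2 * π / 3 = π - π / 3 by ring, sin_pi_sub, sin_pi_div_three]
  have h4 : sin (4 * π / 3) = -(√3 / 2) := by
    rw [show 4 * π / 3 = π / 3 + π by ring, sin_add_pi, sin_pi_div_three]
  have h5 : sin (5 * π / 3) = -(√3 / 2) := by
    rw [show 5 * π / 3 = -(π / 3) + 2 * π by ring, sin_add_two_pi, sin_neg, sin_pi_div_three]
  simp only [sum_range_succ, range_one, sum_singleton, CharP.cast_eq_zero, zero_mul, zero_div,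
    sin_zero, Nat.cast_one, one_mul, sin_pi_div_three, zero_add, Nat.cast_ofNat, h2, ne_eq,
    OfNat.ofNat_ne_zero, not_false_eq_true, mul_div_cancel_left₀, sin_pi, add_zero, h4, neg_mul, h5]
  ring

/-- `Cl₂(π/3) = (1/(2√3))·(ψ′(1/3) − 2π²/3)`, where
`Cl₂(π/3) = ∑_{n≥1} sin(nπ/3)/n²` and `ψ′(1/3) = 9·∑_{k≥0} 1/(3k+1)²`. -/
theorem clausen_pi_div_three :
    (∑' n : ℕ, Real.sin (((n : ℝ) + 1) * π / 3) / ((n : ℝ) + 1)^2)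
      = (1 / (2 * Real.sqrt 3)) *
          (9 * (∑' k : ℕ, 1 / (3 * (k : ℝ) + 1)^2) - 2 * π^2 / 3) := by
  have hClausen : ∑' n : ℕ, sin (((n : ℝ) + 1) * π / 3) / ((n : ℝ) + 1) ^ 2 =
      √3 / 2 * (invSqSum 6 1 + invSqSum 6 2 - invSqSum 6 4 - invSqSum 6 5) := by
    rw [← tsum_sin_nat_mul_pi_div_three_div_sq,
      (summable_div_nat_sq_of_abs_le fun n => abs_sin_le_one _).tsum_eq_zero_add]
    simp
  have hA : ∑' k : ℕ, 1 / (3 * (k : ℝ) + 1) ^ 2 = invSqSum 3 1 := by simp [invSqSum]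
  have hζ := invSqSum_eq_sum_range 1 0 3
  have h30 := invSqSum_mul 3 1 0
  have h31 := invSqSum_eq_sum_range 3 1 2
  have h32 := invSqSum_eq_sum_range 3 2 2
  have h62 := invSqSum_mul 2 3 1
  have h64 := invSqSum_mul 2 3 2
  simp only [invSqSum_one_zero, mul_one, one_mul, add_zero, sum_range_succ, range_one,
    sum_singleton, mul_zero, Nat.cast_ofNat, Nat.reduceMul, zero_add, Nat.reduceAdd]
    at hζ h30 h31 h32 h62 h64
  have hdiff : invSqSum 6 1 + invSqSum 6 2 - invSqSum 6 4 - invSqSum 6 5 =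
      3 / 2 * (invSqSum 3 1 - invSqSum 3 2) := by linarith
  have hsum : invSqSum 3 1 + invSqSum 3 2 = 4 * π ^ 2 / 27 := by linarith
  rw [hClausen, hA, hdiff]
  have hsqrt : √3 ^ 2 = 3 := sq_sqrt (by norm_num)
  field_simp
  linear_combination 9 * (invSqSum 3 1 - invSqSum 3 2) * hsqrt - 27 * hsum
end

section
/- Ramanujan's odd-harmonic sum evaluation at x = 1/√5: the sum ∑_{k≥1} h_k·(1/√5)^{2k−1}/(2k−1) equals π²/20, where h_k = ∑_{j=1}^{k} 1/(2j−1) is the k-th odd harmonic number. Equivalently, 2·∑_{k≥1} h_k·5^{−k+1/2}/(2k−1) = π²/10. -/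
open Real

/-- The `k`-th odd harmonic number `h_k = ∑_{j=1}^k 1/(2j−1)`, with `h₀ = 0`. -/
noncomputable def oddHarmonic (k : ℕ) : ℝ := ∑ j ∈ Finset.range k, 1 / (2 * (j : ℝ) + 1)

/-!
Let `S(x) = ∑ h_{m+1} x^{2m+1}/(2m+1)`. Differentiating termwise and multiplying by the geometric
series in `x²` gives `S'(x) = artanh x / (x (1 - x²))`, which is also the derivative of
`artanh² x / 2 + Li₂(2x/(1+x)) / 2`; both functions vanish at `0`, so they agree on `(0, 1)`.
At `x = 1/√5` we have `2x/(1+x) = φ⁻¹` and `artanh x = log φ`. Since `1 - φ⁻¹ = φ⁻²` and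
`φ⁻¹/(1 + φ⁻¹) = φ⁻²`, Euler's reflection formula at `φ⁻¹`, Landen's identity at `-φ⁻¹` and the
duplication formula at `φ⁻¹` form a linear system in `Li₂(φ⁻¹)`, `Li₂(-φ⁻¹)`, `Li₂(φ⁻²)` whose
solution is `Li₂(φ⁻¹) = π²/10 - log² φ`; hence `S(1/√5) = π²/20`.
-/

open Filter Set Topology Asymptotics
open scoped goldenRatio

theorem eq_of_hasDerivAt_eq_zero_of_tendsto {f : ℝ → ℝ} {s : Set ℝ} (hs : IsOpen s)
    (hs' : IsPreconnected s) (hf : ∀ t ∈ s, HasDerivAt f 0 t) {l : Filter ℝ} [l.NeBot]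
    (hl : ∀ᶠ t in l, t ∈ s) {L : ℝ} (hL : Tendsto f l (𝓝 L)) {x : ℝ} (hx : x ∈ s) :
    f x = L := by
  have hconst : ∀ t ∈ s, f t = f x := fun t ht =>
    hs.is_const_of_deriv_eq_zero hs' (fun t ht => (hf t ht).differentiableAt.differentiableWithinAt)
      (fun t ht => (hf t ht).deriv) ht hx
  exact tendsto_nhds_unique (tendsto_const_nhds.congr' (hl.mono fun t ht => (hconst t ht).symm)) hL

theorem hasDerivAt_tsum_mul_pow_succ_div {𝕜 : Type*} [RCLike 𝕜] {a : ℕ → 𝕜} {d : ℕ → ℕ}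
    (ha : ∀ r : ℝ, 0 ≤ r → r < 1 → Summable fun n => ‖a n‖ * r ^ d n) {x : 𝕜} (hx : ‖x‖ < 1) :
    HasDerivAt (fun y => ∑' n, a n * y ^ (d n + 1) / (d n + 1)) (∑' n, a n * x ^ d n) x := by
  obtain ⟨r, hxr, hr1⟩ := exists_between hx
  have hr0 : 0 < r := (norm_nonneg x).trans_lt hxr
  refine hasDerivAt_tsum_of_isPreconnected (g := fun n y => a n * y ^ (d n + 1) / (d n + 1))
    (g' := fun n y => a n * y ^ d n) (ha r hr0.le hr1) Metric.isOpen_ball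
    (convex_ball 0 r).isPreconnected (fun n y _ => ?_) (fun n y hy => ?_)
    (Metric.mem_ball_self hr0) (summable_zero.congr fun n => by simp) (mem_ball_zero_iff.mpr hxr)
  · refine (((hasDerivAt_pow (d n + 1) y).const_mul (a n)).div_const _).congr_deriv ?_
    have : (d n : 𝕜) + 1 ≠ 0 := by exact_mod_cast Nat.succ_ne_zero (d n)
    rw [Nat.add_sub_cancel]
    push_cast
    field_simp
  · rw [norm_mul, norm_pow]
    gcongr
    exact (mem_ball_zero_iff.mp hy).le

theorem hasSum_sum_range_mul_pow {𝕜 : Type*} [NormedField 𝕜] [CompleteSpace 𝕜] {b : ℕ → 𝕜}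
    {y : 𝕜} (hy : ‖y‖ < 1) (hb : Summable fun j => ‖b j * y ^ j‖) :
    HasSum (fun n => (∑ j ∈ Finset.range (n + 1), b j) * y ^ n)
      ((∑' j, b j * y ^ j) / (1 - y)) := by
  have hgeom : Summable fun i => ‖y ^ i‖ := by
    simpa [norm_pow] using summable_geometric_of_lt_one (norm_nonneg y) hy
  convert hasSum_sum_range_mul_of_summable_norm hb hgeom using 1
  · funext n
    rw [Finset.sum_mul]
    refine Finset.sum_congr rfl fun k hk => ?_
    rw [mul_assoc, ← pow_add, Nat.add_sub_cancel' (Nat.lt_succ_iff.mp (Finset.mem_range.mp hk))]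
  · rw [tsum_geometric_of_norm_lt_one hy, div_eq_mul_inv]

theorem tendsto_log_mul_log_one_sub : Tendsto (fun x => log x * log (1 - x)) (𝓝 0) (𝓝 0) := by
  have hderiv : HasDerivAt (fun x => log (1 - x)) (-1) 0 := by
    simpa using ((hasDerivAt_id (0:ℝ)).const_sub 1).log (by norm_num)
  have hO : (fun x => log (1 - x)) =O[𝓝 0] fun x => x := by
    simpa using hderiv.isBigO_sub
  have hlim : Tendsto (fun x => log x * x) (𝓝 0) (𝓝 0) := by
    simpa [mul_comm] using Real.continuous_mul_log.tendsto 0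
  exact ((isBigO_refl log (𝓝 0)).mul hO).trans_tendsto hlim

noncomputable def dilog (x : ℝ) : ℝ := ∑' n : ℕ, x ^ (n + 1) / ((n : ℝ) + 1) ^ 2

theorem dilog_zero : dilog 0 = 0 := by simp [dilog]

theorem hasSum_dilog {x : ℝ} (hx : |x| ≤ 1) :
    HasSum (fun n : ℕ => x ^ (n + 1) / ((n : ℝ) + 1) ^ 2) (dilog x) := by
  have hzeta : Summable fun n : ℕ => 1 / ((n : ℝ) + 1) ^ 2 := by
    exact_mod_cast (summable_nat_add_iff 1).mpr (Real.summable_one_div_nat_pow.mpr one_lt_two)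
  refine (hzeta.of_norm_bounded fun n => ?_).hasSum
  rw [norm_div, norm_pow, norm_pow, Real.norm_eq_abs, Real.norm_of_nonneg n.cast_add_one_pos.le]
  gcongr
  exact pow_le_one₀ (abs_nonneg x) hx

theorem hasDerivAt_dilog_of_abs_lt_one {x : ℝ} (hx : |x| < 1) :
    HasDerivAt dilog (∑' n : ℕ, x ^ n / ((n : ℝ) + 1)) x := by
  have hsum : ∀ r : ℝ, 0 ≤ r → r < 1 → Summable fun n : ℕ => ‖1 / ((n : ℝ) + 1)‖ * r ^ n :=
    fun r hr0 hr1 => (summable_geometric_of_lt_one hr0 hr1).of_nonneg_of_le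
      (fun n => by positivity) fun n => by
        rw [Real.norm_eq_abs, abs_of_pos (by positivity)]
        exact mul_le_of_le_one_left (by positivity) (by
          rw [div_le_one (by positivity)]; linarith [n.cast_nonneg (α := ℝ)])
  have h := hasDerivAt_tsum_mul_pow_succ_div (𝕜 := ℝ) (d := fun n => n) hsum
    (by rwa [Real.norm_eq_abs])
  have hf : (fun y : ℝ => ∑' n : ℕ, 1 / ((n : ℝ) + 1) * y ^ (n + 1) / ((n : ℝ) + 1)) = dilog := by
    funext y
    simp only [dilog]
    congr 1 with n
    field_simp
  rw [hf] at h
  refine h.congr_deriv ?_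
  congr 1 with n
  ring

theorem continuousAt_dilog {x : ℝ} (hx : |x| < 1) : ContinuousAt dilog x :=
  (hasDerivAt_dilog_of_abs_lt_one hx).continuousAt

theorem hasDerivAt_dilog {x : ℝ} (hx : |x| < 1) (hx0 : x ≠ 0) :
    HasDerivAt dilog (-log (1 - x) / x) x := by
  refine (hasDerivAt_dilog_of_abs_lt_one hx).congr_deriv ?_
  refine Eq.trans ?_ ((Real.hasSum_pow_div_log_of_abs_lt_one hx).div_const x).tsum_eq
  congr 1 with n
  field_simp
  ring

theorem tendsto_dilog_one : Tendsto dilog (𝓝[<] 1) (𝓝 (π ^ 2 / 6)) := by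
  have hzeta : HasSum (fun n : ℕ => 1 / ((n : ℝ) + 1) ^ 2) (π ^ 2 / 6) := by
    simpa using (hasSum_nat_add_iff' (f := fun n : ℕ => 1 / (n : ℝ) ^ 2) 1).mpr hasSum_zeta_two
  have habel := Real.tendsto_tsum_powerSeries_nhdsWithin_lt hzeta.tendsto_sum_nat
  have hx : Tendsto (fun x : ℝ => x) (𝓝[<] 1) (𝓝 1) := nhdsWithin_le_nhds
  refine (one_mul (π ^ 2 / 6) ▸ hx.mul habel).congr fun x => ?_
  rw [dilog, ← tsum_mul_left]
  congr 1 with n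
  ring

theorem dilog_add_dilog_neg {x : ℝ} (hx : |x| ≤ 1) :
    dilog x + dilog (-x) = dilog (x ^ 2) / 2 := by
  set F : ℕ → ℝ := fun n => x ^ (n + 1) / ((n : ℝ) + 1) ^ 2 + (-x) ^ (n + 1) / ((n : ℝ) + 1) ^ 2
  have heven : HasSum (fun m => F (2 * m)) 0 := by
    convert hasSum_zero with m
    simp only [F, Odd.neg_pow (odd_two_mul_add_one m)]
    ring
  have hodd : HasSum (fun m => F (2 * m + 1)) (dilog (x ^ 2) / 2) := by
    refine ((hasSum_dilog ?_).div_const 2).congr_fun fun m => ?_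
    · rw [abs_pow]; exact pow_le_one₀ (abs_nonneg x) hx
    · simp only [F]
      rw [Even.neg_pow ⟨m + 1, by ring⟩, ← pow_mul]
      push_cast
      field_simp
      ring
  simpa using ((hasSum_dilog hx).add (hasSum_dilog (by rwa [abs_neg]))).unique
    (heven.even_add_odd hodd)

theorem dilog_add_dilog_div_sub_one {x : ℝ} (hx : x ∈ Ioo (-1) 0) :
    dilog x + dilog (x / (x - 1)) = -log (1 - x) ^ 2 / 2 := by
  set G : ℝ → ℝ := fun t => dilog t + dilog (t / (t - 1)) + log (1 - t) ^ 2 / 2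
  have hderiv : ∀ t ∈ Ioo (-1 : ℝ) 0, HasDerivAt G 0 t := by
    rintro t ⟨ht1, ht0⟩
    have ht : t ≠ 0 := ht0.ne
    have ht_sub_one : t - 1 ≠ 0 := by linarith
    have hone_sub_t : 1 - t ≠ 0 := by linarith
    have hpos : 0 < t / (t - 1) := div_pos_of_neg_of_neg ht0 (by linarith)
    have hlt : t / (t - 1) < 1 := by rw [div_lt_one_of_neg (by linarith)]; linarith
    have hinner := (hasDerivAt_id' t).div ((hasDerivAt_id' t).sub_const 1) ht_sub_one
    have hlog : log (1 - t / (t - 1)) = -log (1 - t) := by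
      rw [← log_inv]
      congr 1
      field_simp
      ring
    have h := ((hasDerivAt_dilog (abs_lt.2 ⟨ht1, by linarith⟩) ht).add
      ((hasDerivAt_dilog (abs_lt.2 ⟨by linarith, hlt⟩) hpos.ne').comp t hinner)).add
      (((((hasDerivAt_id' t).const_sub 1).log (by linarith)).pow 2).div_const 2)
    refine h.congr_deriv ?_
    rw [hlog]
    field_simp
    ring
  have hcont : ContinuousAt G 0 :=
    ((continuousAt_dilog (by simp)).add ((continuousAt_dilog (by simp)).comp
      (continuousAt_id.div (continuousAt_id.sub continuousAt_const) (by norm_num)))).add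
      ((((continuousAt_const.sub continuousAt_id).log (by simp)).pow 2).div_const 2)
  have hlim : Tendsto G (𝓝[<] 0) (𝓝 0) := by
    simpa [G, dilog_zero] using hcont.tendsto.mono_left nhdsWithin_le_nhds
  have := eq_of_hasDerivAt_eq_zero_of_tendsto isOpen_Ioo isPreconnected_Ioo hderiv
    (Ioo_mem_nhdsLT (by norm_num)) hlim hx
  simp only [G] at this
  linarith

theorem dilog_add_dilog_one_sub {x : ℝ} (hx : x ∈ Ioo 0 1) :
    dilog x + dilog (1 - x) = π ^ 2 / 6 - log x * log (1 - x) := by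
  set F : ℝ → ℝ := fun t => dilog t + dilog (1 - t) + log t * log (1 - t)
  have hderiv : ∀ t ∈ Ioo (0 : ℝ) 1, HasDerivAt F 0 t := by
    rintro t ⟨ht0, ht1⟩
    have hsub := (hasDerivAt_id' t).const_sub 1
    have h := ((hasDerivAt_dilog (abs_lt.2 ⟨by linarith, ht1⟩) ht0.ne').add
      ((hasDerivAt_dilog (abs_lt.2 ⟨by linarith, by linarith⟩) (by linarith)).comp t
        hsub)).add ((hasDerivAt_log ht0.ne').mul (hsub.log (by linarith)))
    refine h.congr_deriv ?_
    rw [sub_sub_cancel]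
    have hone_sub_t : 1 - t ≠ 0 := by linarith
    field_simp
    ring
  have hsub : Tendsto (fun t : ℝ => 1 - t) (𝓝[<] 1) (𝓝 0) :=
    ((continuous_sub_left 1).tendsto' 1 0 (sub_self 1)).mono_left nhdsWithin_le_nhds
  have hlim : Tendsto F (𝓝[<] 1) (𝓝 (π ^ 2 / 6)) := by
    have hdilog := (continuousAt_dilog (x := 0) (by simp)).tendsto.comp hsub
    have hlog := tendsto_log_mul_log_one_sub.comp hsub
    rw [dilog_zero] at hdilog
    simpa [F, Function.comp_def, mul_comm] using (tendsto_dilog_one.add hdilog).add hlog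
  have := eq_of_hasDerivAt_eq_zero_of_tendsto isOpen_Ioo isPreconnected_Ioo hderiv
    (Ioo_mem_nhdsLT (by norm_num)) hlim hx
  simp only [F] at this
  linarith

theorem dilog_inv_goldenRatio : dilog φ⁻¹ = π ^ 2 / 10 - log φ ^ 2 := by
  have hφ : φ ^ 2 = φ + 1 := goldenRatio_sq
  have hinv : φ⁻¹ = φ - 1 := by rw [inv_goldenRatio, ← one_sub_goldenConj]; ring
  have hlog : log (φ - 1) = -log φ := by rw [← hinv, log_inv]
  have ha : φ - 1 ∈ Ioo 0 1 := ⟨by linarith [one_lt_goldenRatio], by linarith [goldenRatio_lt_two]⟩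
  have hone_sub : 1 - (φ - 1) = (φ - 1) ^ 2 := by linear_combination -hφ
  have hdiv : -(φ - 1) / (-(φ - 1) - 1) = (φ - 1) ^ 2 := by
    rw [div_eq_iff (by linarith [ha.1])]
    linear_combination (φ - 1) * hφ
  have hreflect := dilog_add_dilog_one_sub ha
  have hdup := dilog_add_dilog_neg (abs_le.2 ⟨by linarith [ha.1], ha.2.le⟩)
  have hlanden :=
    dilog_add_dilog_div_sub_one (x := -(φ - 1)) ⟨by linarith [ha.2], by linarith [ha.1]⟩
  rw [hone_sub, log_pow, hlog] at hreflect
  rw [hdiv, sub_neg_eq_add, add_sub_cancel] at hlanden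
  rw [hinv]
  linear_combination (3 / 5) * hreflect - (2 / 5) * hlanden + (2 / 5) * hdup

noncomputable def oddHarmonicSeries (x : ℝ) : ℝ :=
  ∑' m : ℕ, oddHarmonic (m + 1) * x ^ (2 * m + 1) / (2 * (m : ℝ) + 1)

theorem hasSum_oddHarmonic_mul_pow {y : ℝ} (hy : |y| < 1) :
    HasSum (fun n => oddHarmonic (n + 1) * y ^ n)
      ((∑' j : ℕ, 1 / (2 * (j : ℝ) + 1) * y ^ j) / (1 - y)) := by
  refine hasSum_sum_range_mul_pow (by rwa [Real.norm_eq_abs]) ?_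
  refine (summable_geometric_of_lt_one (abs_nonneg y) hy).of_nonneg_of_le
    (fun j => norm_nonneg _) fun j => ?_
  have hj : (0 : ℝ) < 2 * j + 1 := by positivity
  rw [norm_mul, norm_pow, Real.norm_eq_abs, Real.norm_eq_abs, abs_of_pos (one_div_pos.2 hj)]
  refine mul_le_of_le_one_left (pow_nonneg (abs_nonneg y) j) ?_
  rw [div_le_one (by positivity)]
  linarith [j.cast_nonneg (α := ℝ)]

theorem hasSum_one_div_two_mul_add_one_mul_sq_pow {x : ℝ} (hx : |x| < 1) (hx0 : x ≠ 0) :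
    HasSum (fun j : ℕ => 1 / (2 * (j : ℝ) + 1) * (x ^ 2) ^ j)
      ((log (1 + x) - log (1 - x)) / (2 * x)) := by
  refine ((Real.hasSum_log_sub_log_of_abs_lt_one hx).div_const (2 * x)).congr_fun fun j => ?_
  rw [← pow_mul, pow_succ]
  field_simp

theorem hasDerivAt_oddHarmonicSeries_of_abs_lt_one {x : ℝ} (hx : |x| < 1) :
    HasDerivAt oddHarmonicSeries (∑' m : ℕ, oddHarmonic (m + 1) * x ^ (2 * m)) x := by
  have hsum : ∀ r : ℝ, 0 ≤ r → r < 1 →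
      Summable fun m : ℕ => ‖oddHarmonic (m + 1)‖ * r ^ (2 * m) := fun r hr0 hr1 => by
    have h := (hasSum_oddHarmonic_mul_pow (y := r ^ 2) (by
      rw [abs_of_nonneg (by positivity)]; nlinarith)).summable
    refine (summable_abs_iff.mpr h).congr fun m => ?_
    rw [abs_mul, abs_of_nonneg (by positivity : (0 : ℝ) ≤ (r ^ 2) ^ m), ← pow_mul]
    rfl
  have h := hasDerivAt_tsum_mul_pow_succ_div (𝕜 := ℝ) (d := fun m => 2 * m) hsum
    (by rwa [Real.norm_eq_abs])
  have hf : (fun y : ℝ => ∑' m : ℕ, oddHarmonic (m + 1) * y ^ (2 * m + 1) / ((↑(2 * m) : ℝ) + 1))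
      = oddHarmonicSeries := by
    funext y
    simp only [oddHarmonicSeries, Nat.cast_mul, Nat.cast_ofNat]
  rwa [hf] at h

theorem hasDerivAt_oddHarmonicSeries {x : ℝ} (hx : |x| < 1) (hx0 : x ≠ 0) :
    HasDerivAt oddHarmonicSeries ((log (1 + x) - log (1 - x)) / (2 * x * (1 - x ^ 2))) x := by
  have hx2 : |x ^ 2| < 1 := by rw [abs_pow]; exact pow_lt_one₀ (abs_nonneg x) hx two_ne_zero
  refine (hasDerivAt_oddHarmonicSeries_of_abs_lt_one hx).congr_deriv ?_
  simp_rw [pow_mul]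
  rw [(hasSum_oddHarmonic_mul_pow hx2).tsum_eq,
    (hasSum_one_div_two_mul_add_one_mul_sq_pow hx hx0).tsum_eq, div_div]

theorem oddHarmonicSeries_eq_log_sq_add_dilog {x : ℝ} (hx : x ∈ Ioo 0 1) :
    oddHarmonicSeries x = (log (1 + x) - log (1 - x)) ^ 2 / 8 + dilog (2 * x / (1 + x)) / 2 := by
  set H : ℝ → ℝ := fun t =>
    oddHarmonicSeries t - ((log (1 + t) - log (1 - t)) ^ 2 / 8 + dilog (2 * t / (1 + t)) / 2)
  have hderiv : ∀ t ∈ Ioo (0 : ℝ) 1, HasDerivAt H 0 t := by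
    rintro t ⟨ht0, ht1⟩
    have hp : 1 + t ≠ 0 := by linarith
    have hm : 1 - t ≠ 0 := by linarith
    have ht : t ≠ 0 := ht0.ne'
    have hv : 2 * t / (1 + t) ∈ Ioo 0 1 :=
      ⟨by positivity, by rw [div_lt_one (by linarith)]; linarith⟩
    have hlogv : log (1 - 2 * t / (1 + t)) = log (1 - t) - log (1 + t) := by
      rw [← log_div hm hp]
      congr 1
      field_simp
      ring
    have hA := (((hasDerivAt_id' t).const_add 1).log hp).sub
      (((hasDerivAt_id' t).const_sub 1).log hm)
    have hinner := ((hasDerivAt_id' t).const_mul 2).div ((hasDerivAt_id' t).const_add 1) hp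
    have h := (hasDerivAt_oddHarmonicSeries (abs_lt.2 ⟨by linarith, ht1⟩) ht).sub
      (((hA.pow 2).div_const 8).add
        (((hasDerivAt_dilog (abs_lt.2 ⟨by linarith [hv.1], hv.2⟩) hv.1.ne').comp t
          hinner).div_const 2))
    refine h.congr_deriv ?_
    rw [hlogv, Pi.sub_apply]
    have h1 : 1 - t ^ 2 ≠ 0 := by nlinarith
    field_simp
    ring
  have hcont : ContinuousAt H 0 := by
    have hA : ContinuousAt (fun t : ℝ => log (1 + t) - log (1 - t)) 0 :=
      ((continuousAt_const.add continuousAt_id).log (by simp)).sub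
        ((continuousAt_const.sub continuousAt_id).log (by simp))
    have hinner : ContinuousAt (fun t : ℝ => 2 * t / (1 + t)) 0 :=
      (continuousAt_const.mul continuousAt_id).div (continuousAt_const.add continuousAt_id)
        (by simp)
    exact (hasDerivAt_oddHarmonicSeries_of_abs_lt_one (by simp)).continuousAt.sub
      (((hA.pow 2).div_const 8).add (((continuousAt_dilog (by simp)).comp hinner).div_const 2))
  have hlim : Tendsto H (𝓝[>] 0) (𝓝 0) := by
    simpa [H, oddHarmonicSeries, dilog_zero] using hcont.tendsto.mono_left nhdsWithin_le_nhds
  have := eq_of_hasDerivAt_eq_zero_of_tendsto isOpen_Ioo isPreconnected_Ioo hderiv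
    (Ioo_mem_nhdsGT (by norm_num)) hlim hx
  simp only [H] at this
  linarith

/-- Ramanujan's odd-harmonic sum at `x = 1/√5`:
`∑_{k≥1} h_k·(1/√5)^{2k−1}/(2k−1) = π²/20` (here the sum over `k ≥ 1` is indexed by
`k = m + 1`, `m ≥ 0`, so that `2k − 1 = 2m + 1`). -/
theorem ramanujan_odd_harmonic_sum :
    (∑' m : ℕ, oddHarmonic (m + 1) * (1 / Real.sqrt 5)^(2 * m + 1) / (2 * (m : ℝ) + 1))
      = π^2 / 20 := by
  have h5 : √5 ^ 2 = 5 := Real.sq_sqrt (by norm_num)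
  have h2 : 2 < √5 := by nlinarith [Real.sqrt_nonneg 5]
  have hx : 1 / √5 ∈ Ioo (0 : ℝ) 1 := ⟨by positivity, by rw [div_lt_one (by linarith)]; linarith⟩
  have hv : 2 * (1 / √5) / (1 + 1 / √5) = φ⁻¹ := by
    rw [goldenRatio]
    field_simp
    ring
  have hA : log (1 + 1 / √5) - log (1 - 1 / √5) = 2 * log φ := by
    have hratio : (1 + 1 / √5) / (1 - 1 / √5) = φ ^ 2 := by
      rw [goldenRatio, div_eq_iff (by linarith [hx.2])]
      field_simp
      nlinarith
    rw [← log_div (by linarith [hx.1]) (by linarith [hx.2]), hratio, log_pow]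
    push_cast
    ring
  change oddHarmonicSeries (1 / √5) = _
  rw [oddHarmonicSeries_eq_log_sq_add_dilog hx, hv, hA, dilog_inv_goldenRatio]
  ring
end
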